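/- arXiv:1512.01021 — 3 statements merged into one kernel-verified Lean document; each statement's English description precedes it below -/
import Mathlib

section
/- For every nonempty word u over an alphabet A (with decidable equality) there exist n ≥ 1, letters a_1, …, a_n and words u_1, …, u_n such that u = [a_1] ++ u_1 ++ [a_2] ++ u_2 ++ ⋯ ++ [a_n] ++ u_n, for each i = 2, …, n the letter a_i does not occur in the prefix [a_1] ++ u_1 ++ ⋯ ++ [a_{i-1}] ++ u_{i-1}, the letters a_1, …, a_n are pairwise distinct, and the content of u equals {a_1, …, a_n}. (Existence of the first-occurrences factorization of a word.) -/
/-!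
Build the factorization letter by letter, reading the word from left to right. Appending a
letter `x` to `u` either opens a new block `[x]` (when `x` does not occur in `u`, so it is a
first occurrence) or extends the last block (when it does, so the first occurrences are
unchanged).
-/

namespace FirstOccurrences

variable {A : Type*}

def blocks (as : List A) (us : List (List A)) : List (List A) :=
  List.zipWith (fun a w => a :: w) as us

section Blocks

variable {as : List A} {us : List (List A)}

theorem length_blocks (h : as.length = us.length) :
    (blocks as us).length = as.length := by
  simp [blocks, h]

theorem blocks_append (h : as.length = us.length)
    (a : A) (w : List A) : blocks (as ++ [a]) (us ++ [w]) = blocks as us ++ [a :: w] := by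
  simp [blocks, List.zipWith_append h]

theorem take_blocks_append (h : as.length = us.length)
    (a : A) (w : List A) {i : ℕ} (hi : i ≤ as.length) :
    (blocks (as ++ [a]) (us ++ [w])).take i = (blocks as us).take i := by
  rw [blocks_append h, List.take_append_of_le_length (by rwa [length_blocks h])]

theorem not_mem_take_blocks_append (h : as.length = us.length)
    (hold : ∀ i (hi : i < as.length), as[i] ∉ ((blocks as us).take i).flatten)
    {a : A} (hnew : a ∉ (blocks as us).flatten) (w : List A) :
    ∀ i (hi : i < (as ++ [a]).length),
      (as ++ [a])[i] ∉ ((blocks (as ++ [a]) (us ++ [w])).take i).flatten := by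
  intro i hi
  rw [take_blocks_append h a w (by simp at hi; omega)]
  rcases Nat.lt_or_ge i as.length with hlt | hge
  · rw [List.getElem_append_left hlt]
    exact hold i hlt
  · obtain rfl : i = as.length := by simp at hi; omega
    rw [List.getElem_concat_length rfl, ← length_blocks h, List.take_length]
    exact hnew

end Blocks

structure IsFactorization (u : List A) (as : List A) (us : List (List A)) : Prop where
  length_eq : as.length = us.length
  eq_flatten : u = (blocks as us).flatten
  not_mem_take : ∀ i (h : i < as.length), as[i] ∉ ((blocks as us).take i).flatten
  nodup : as.Nodup
  mem_iff : ∀ x, x ∈ u ↔ x ∈ as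

namespace IsFactorization

theorem nil : IsFactorization ([] : List A) [] [] where
  length_eq := rfl
  eq_flatten := rfl
  not_mem_take i h := absurd h (Nat.not_lt_zero i)
  nodup := List.nodup_nil
  mem_iff _ := Iff.rfl

variable {u as : List A} {us : List (List A)}

theorem ne_nil (hf : IsFactorization u as us) (hu : u ≠ []) : as ≠ [] := by
  rintro rfl
  exact hu (by simpa [blocks] using hf.eq_flatten)

theorem append_of_not_mem (hf : IsFactorization u as us) {x : A} (hx : x ∉ u) :
    IsFactorization (u ++ [x]) (as ++ [x]) (us ++ [[]]) where
  length_eq := by simp [hf.length_eq]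
  eq_flatten := by rw [blocks_append hf.length_eq, List.flatten_append, ← hf.eq_flatten]; rfl
  not_mem_take := not_mem_take_blocks_append hf.length_eq hf.not_mem_take
    (hf.eq_flatten ▸ hx) []
  nodup := List.nodup_append.2 ⟨hf.nodup, List.nodup_singleton x, by
    rintro y hy z hz rfl
    rw [List.mem_singleton.1 hz] at hy
    exact hx ((hf.mem_iff x).2 hy)⟩
  mem_iff y := by simp [hf.mem_iff]

theorem append_of_mem {a : A} {w : List A}
    (hf : IsFactorization u (as ++ [a]) (us ++ [w])) {x : A} (hx : x ∈ u) :
    IsFactorization (u ++ [x]) (as ++ [a]) (us ++ [w ++ [x]]) := by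
  have hlen : as.length = us.length := by simpa using hf.length_eq
  have hprefix : a ∉ (blocks as us).flatten := by
    have := hf.not_mem_take as.length (by simp)
    rwa [List.getElem_concat_length rfl, take_blocks_append hlen a w le_rfl,
      ← length_blocks hlen, List.take_length] at this
  exact
    { length_eq := by simp [hlen]
      eq_flatten := by
        rw [hf.eq_flatten, blocks_append hlen, blocks_append hlen]
        simp
      not_mem_take := not_mem_take_blocks_append hlen
        (fun i hi => by
          have := hf.not_mem_take i (by simp; omega)
          rwa [List.getElem_append_left hi, take_blocks_append hlen a w hi.le] at this)
        hprefix (w ++ [x])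
      nodup := hf.nodup
      mem_iff y := by
        rw [List.mem_append, List.mem_singleton, ← hf.mem_iff, or_iff_left_of_imp (· ▸ hx)] }

end IsFactorization

theorem exists_isFactorization (u : List A) : ∃ as us, IsFactorization u as us := by
  induction u using List.reverseRecOn with
  | nil => exact ⟨[], [], IsFactorization.nil⟩
  | append_singleton u x ih =>
    obtain ⟨as, us, hf⟩ := ih
    by_cases hx : x ∈ u
    · have hu : u ≠ [] := List.ne_nil_of_mem hx
      have has := hf.ne_nil hu
      have hus : us ≠ [] := List.ne_nil_of_length_pos (hf.length_eq ▸ List.length_pos_iff.2 has)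
      rw [← List.dropLast_append_getLast has, ← List.dropLast_append_getLast hus] at hf
      exact ⟨_, _, hf.append_of_mem hx⟩
    · exact ⟨_, _, hf.append_of_not_mem hx⟩

end FirstOccurrences

open FirstOccurrences in
/-- Existence of the first-occurrences factorization of a nonempty word:
`u = [a₁] ++ u₁ ++ [a₂] ++ u₂ ++ ⋯ ++ [aₙ] ++ uₙ` with `n ≥ 1`, each `aᵢ`
(for `i ≥ 2`) not occurring in the preceding prefix, the `aᵢ` pairwise
distinct, and the content of `u` equal to `{a₁, …, aₙ}`. -/
theorem first_occurrences_factorization_exists {A : Type*} [DecidableEq A]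
    (u : List A) (hu : u ≠ []) :
    ∃ (as : List A) (us : List (List A)),
      as.length = us.length ∧
      0 < as.length ∧
      u = (List.zipWith (fun a w => a :: w) as us).flatten ∧
      (∀ i (h : i < as.length), 0 < i →
        as.get ⟨i, h⟩ ∉
          ((List.zipWith (fun a w => a :: w) as us).take i).flatten.toFinset) ∧
      as.Nodup ∧
      u.toFinset = as.toFinset := by
  obtain ⟨as, us, hf⟩ := exists_isFactorization u
  refine ⟨as, us, hf.length_eq, List.length_pos_iff.2 (hf.ne_nil hu), hf.eq_flatten,
    fun i h _ => ?_, hf.nodup, ?_⟩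
  · simpa [blocks] using hf.not_mem_take i h
  · ext x
    simpa using hf.mem_iff x
end

section
/- The first-occurrences factorization of a nonempty word is unique: if u = [a_1] ++ u_1 ++ ⋯ ++ [a_n] ++ u_n = [b_1] ++ v_1 ++ ⋯ ++ [b_m] ++ v_m are two factorizations such that a_i ∉ c([a_1] ++ u_1 ++ ⋯ ++ [a_{i-1}] ++ u_{i-1}) for i = 2, …, n, c(u) = {a_1, …, a_n}, b_j ∉ c([b_1] ++ v_1 ++ ⋯ ++ [b_{j-1}] ++ v_{j-1}) for j = 2, …, m, and c(u) = {b_1, …, b_m}, then n = m and a_i = b_i, u_i = v_i for all i. -/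
/-!
Both factorizations are read off the word greedily. The letters `aᵢ` are new when they occur,
while every letter of a block `uᵢ` is some `aⱼ` and cannot be a later, still unseen one; so
`uᵢ` is the longest segment after `aᵢ` using only letters already seen, and the next factor
starts exactly at the next new letter. Induction along the word, carrying the prefix read so
far, then identifies the two factorizations block by block.
-/

section

variable {A : Type*}

def factorBlocks (as : List A) (us : List (List A)) : List (List A) :=
  List.zipWith (fun a w => a :: w) as us

@[simp]
lemma factorBlocks_nil_left (us : List (List A)) : factorBlocks [] us = [] := rfl

@[simp]
lemma factorBlocks_cons_cons (a : A) (as w : List A) (us : List (List A)) :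
    factorBlocks (a :: as) (w :: us) = (a :: w) :: factorBlocks as us := rfl

lemma List.takeWhile_append_eq_left {p : A → Bool} {w r : List A} (hw : ∀ x ∈ w, p x)
    (hr : ∀ b ∈ r.head?, ¬ p b) : (w ++ r).takeWhile p = w := by
  rw [List.takeWhile_append_of_pos hw]
  cases r with
  | nil => simp
  | cons b r => simp [List.takeWhile_cons_of_neg (hr b rfl)]

/-- `p` is a prefix read before the factorization starts: its letters count as seen, so even
`a₁` must avoid them. -/
structure IsFirstOccFactorization (p as : List A) (us : List (List A)) : Prop where
  length_eq : as.length = us.length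
  not_mem_prefix : ∀ i (h : i < as.length), as[i] ∉ p ++ ((factorBlocks as us).take i).flatten
  mem_or_mem : ∀ x ∈ (factorBlocks as us).flatten, x ∈ p ∨ x ∈ as

namespace IsFirstOccFactorization

variable {p as bs : List A} {us vs : List (List A)} {a : A} {w : List A}

lemma eq_nil_of_nil (h : IsFirstOccFactorization p [] us) : us = [] :=
  List.length_eq_zero_iff.mp h.length_eq.symm

lemma not_mem_of_mem_prefix (h : IsFirstOccFactorization p as us) {x : A} (hx : x ∈ p) :
    x ∉ as := by
  intro hxs
  obtain ⟨i, hi, rfl⟩ := List.getElem_of_mem hxs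
  exact h.not_mem_prefix i hi (List.mem_append_left _ hx)

lemma head_not_mem (h : IsFirstOccFactorization p (a :: as) (w :: us)) : a ∉ p :=
  fun ha => h.not_mem_prefix 0 (by simp) (by simpa using ha)

lemma tail (h : IsFirstOccFactorization p (a :: as) (w :: us)) :
    IsFirstOccFactorization (p ++ a :: w) as us where
  length_eq := by simpa using h.length_eq
  not_mem_prefix i hi hmem := h.not_mem_prefix (i + 1) (by simpa) (by simpa using hmem)
  mem_or_mem x hx := by
    rcases h.mem_or_mem x (by simp [hx]) with hp | hx'
    · exact Or.inl (List.mem_append_left _ hp)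
    · rcases List.mem_cons.mp hx' with rfl | has
      · exact Or.inl (by simp)
      · exact Or.inr has

lemma forall_head?_not_mem (h : IsFirstOccFactorization p as us) :
    ∀ b ∈ (factorBlocks as us).flatten.head?, b ∉ p := by
  cases as with
  | nil => simp
  | cons a as =>
    obtain ⟨w, us, rfl⟩ := List.exists_cons_of_length_eq_add_one h.length_eq.symm
    simpa using h.head_not_mem

lemma mem_block (h : IsFirstOccFactorization p (a :: as) (w :: us)) {x : A} (hx : x ∈ w) :
    x ∈ p ∨ x = a := by
  have hxs : x ∉ as := h.tail.not_mem_of_mem_prefix (by simp [hx])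
  simpa [hxs] using h.mem_or_mem x (by simp [hx])

lemma block_eq_takeWhile [DecidableEq A] (h : IsFirstOccFactorization p (a :: as) (w :: us)) :
    w = (w ++ (factorBlocks as us).flatten).takeWhile (fun x => decide (x ∈ p ∨ x = a)) := by
  refine (List.takeWhile_append_eq_left (fun x hx => by simpa using h.mem_block hx) ?_).symm
  intro b hb
  have hb' := h.tail.forall_head?_not_mem b hb
  simp only [List.mem_append, List.mem_cons, not_or] at hb'
  simp [hb'.1, hb'.2.1]

theorem eq_of_flatten_eq [DecidableEq A] (h₁ : IsFirstOccFactorization p as us)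
    (h₂ : IsFirstOccFactorization p bs vs)
    (heq : (factorBlocks as us).flatten = (factorBlocks bs vs).flatten) :
    as = bs ∧ us = vs := by
  induction as generalizing p us bs vs with
  | nil =>
    cases bs with
    | nil => exact ⟨rfl, h₁.eq_nil_of_nil.trans h₂.eq_nil_of_nil.symm⟩
    | cons b bs =>
      obtain ⟨v, vs, rfl⟩ := List.exists_cons_of_length_eq_add_one h₂.length_eq.symm
      simp at heq
  | cons a as ih =>
    obtain ⟨w, us, rfl⟩ := List.exists_cons_of_length_eq_add_one h₁.length_eq.symm
    cases bs with
    | nil => simp [h₂.eq_nil_of_nil] at heq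
    | cons b bs =>
      obtain ⟨v, vs, rfl⟩ := List.exists_cons_of_length_eq_add_one h₂.length_eq.symm
      obtain ⟨rfl, hrest⟩ : a = b ∧ w ++ (factorBlocks as us).flatten =
          v ++ (factorBlocks bs vs).flatten := by simpa using heq
      have hwv : w = v := by rw [h₁.block_eq_takeWhile, h₂.block_eq_takeWhile, hrest]
      subst hwv
      obtain ⟨rfl, rfl⟩ := ih h₁.tail h₂.tail (List.append_cancel_left hrest)
      exact ⟨rfl, rfl⟩

end IsFirstOccFactorization

lemma isFirstOccFactorization_nil_of_toFinset_subset [DecidableEq A] {as : List A}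
    {us : List (List A)} (hlen : as.length = us.length)
    (hpre : ∀ i (h : i < as.length), 0 < i →
      as.get ⟨i, h⟩ ∉ ((factorBlocks as us).take i).flatten.toFinset)
    (hcont : (factorBlocks as us).flatten.toFinset ⊆ as.toFinset) :
    IsFirstOccFactorization [] as us where
  length_eq := hlen
  not_mem_prefix i hi := by
    rcases Nat.eq_zero_or_pos i with rfl | hpos
    · simp
    · simpa using hpre i hi hpos
  mem_or_mem x hx := Or.inr (List.mem_toFinset.mp (hcont (List.mem_toFinset.mpr hx)))

end

theorem first_occurrences_factorization_unique_general {A : Type*} [DecidableEq A]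
    (u : List A)
    (as bs : List A) (us vs : List (List A))
    (hlen₁ : as.length = us.length) (hlen₂ : bs.length = vs.length)
    (hfact₁ : u = (List.zipWith (fun a w => a :: w) as us).flatten)
    (hfact₂ : u = (List.zipWith (fun b w => b :: w) bs vs).flatten)
    (hpre₁ : ∀ i (h : i < as.length), 0 < i →
      as.get ⟨i, h⟩ ∉
        ((List.zipWith (fun a w => a :: w) as us).take i).flatten.toFinset)
    (hpre₂ : ∀ j (h : j < bs.length), 0 < j →
      bs.get ⟨j, h⟩ ∉
        ((List.zipWith (fun b w => b :: w) bs vs).take j).flatten.toFinset)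
    (hcont₁ : u.toFinset = as.toFinset)
    (hcont₂ : u.toFinset = bs.toFinset) :
    as = bs ∧ us = vs := by
  have h₁ := isFirstOccFactorization_nil_of_toFinset_subset hlen₁ hpre₁ (hfact₁ ▸ hcont₁).subset
  have h₂ := isFirstOccFactorization_nil_of_toFinset_subset hlen₂ hpre₂ (hfact₂ ▸ hcont₂).subset
  exact h₁.eq_of_flatten_eq h₂ (hfact₁.symm.trans hfact₂)

/-- Uniqueness of the first-occurrences factorization of a nonempty word:
two factorizations `u = [a₁] ++ u₁ ++ ⋯ ++ [aₙ] ++ uₙ = [b₁] ++ v₁ ++ ⋯ ++ [bₘ] ++ vₘ`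
satisfying the first-occurrences conditions coincide (so `n = m`, `aᵢ = bᵢ`,
`uᵢ = vᵢ` for all `i`). -/
theorem first_occurrences_factorization_unique {A : Type*} [DecidableEq A]
    (u : List A) (hu : u ≠ [])
    (as bs : List A) (us vs : List (List A))
    (hlen₁ : as.length = us.length) (hlen₂ : bs.length = vs.length)
    (hfact₁ : u = (List.zipWith (fun a w => a :: w) as us).flatten)
    (hfact₂ : u = (List.zipWith (fun b w => b :: w) bs vs).flatten)
    (hpre₁ : ∀ i (h : i < as.length), 0 < i →
      as.get ⟨i, h⟩ ∉
        ((List.zipWith (fun a w => a :: w) as us).take i).flatten.toFinset)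
    (hpre₂ : ∀ j (h : j < bs.length), 0 < j →
      bs.get ⟨j, h⟩ ∉
        ((List.zipWith (fun b w => b :: w) bs vs).take j).flatten.toFinset)
    (hcont₁ : u.toFinset = as.toFinset)
    (hcont₂ : u.toFinset = bs.toFinset) :
    as = bs ∧ us = vs :=
  first_occurrences_factorization_unique_general u as bs us vs hlen₁ hlen₂ hfact₁ hfact₂ hpre₁ hpre₂
    hcont₁ hcont₂
end

section
/- Let S be a compact Hausdorff, totally disconnected topological semigroup, i.e., a compact Hausdorff totally disconnected space equipped with an associative and jointly continuous multiplication. Then for every s ∈ S, the topological closure of the set {s^n : n ≥ 1} contains exactly one idempotent. (Well-definedness of the ω-power on profinite semigroups.) -/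
/-- Positive powers in a semigroup: `spow s n = s ^ (n + 1)`, so that
`{spow s n : n ∈ ℕ} = {s ^ m : m ≥ 1}`. -/
def spow {S : Type*} [Semigroup S] (s : S) : ℕ → S
  | 0 => s
  | n + 1 => spow s n * s

/-!
The closure `T` of the positive powers of `s` is a compact commutative subsemigroup, so it
contains an idempotent by the Ellis–Numakura lemma. For uniqueness, an idempotent `f ∈ T`
satisfies `f = f ^ (n + 1)`, so it lies in the closure of `{s ^ m : m > n}` for every `n`; as
`s ^ (n + 1)` divides every element of that closure and the divisors of `f` form a closed set,
every element of `T` divides `f`. Two commuting idempotents dividing each other are equal.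
-/

open Set

theorem IsIdempotentElem.mul_eq_of_dvd {S : Type*} [Semigroup S] {e f : S}
    (he : IsIdempotentElem e) (hef : e ∣ f) : e * f = f := by
  obtain ⟨k, rfl⟩ := hef
  rw [← mul_assoc, he.eq]

theorem IsIdempotentElem.eq_of_dvd_of_dvd {S : Type*} [Semigroup S] {e f : S}
    (he : IsIdempotentElem e) (hf : IsIdempotentElem f) (hef : e ∣ f) (hfe : f ∣ e)
    (hc : Commute e f) : e = f := by
  rw [← hf.mul_eq_of_dvd hfe, ← hc.eq, he.mul_eq_of_dvd hef]

theorem Commute.of_mem_closure {M : Type*} [Mul M] [TopologicalSpace M]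
    [SeparatelyContinuousMul M] [T2Space M] {A : Set M} (hA : ∀ a ∈ A, ∀ b ∈ A, Commute a b)
    {x y : M} (hx : x ∈ closure A) (hy : y ∈ closure A) : Commute x y :=
  eqOn_closure₂' (f := (· * ·)) (g := fun a b => b * a) hA (by fun_prop) (by fun_prop)
    (by fun_prop) (by fun_prop) x hx y hy

section CompactSemigroup

variable {S : Type*} [Semigroup S] [TopologicalSpace S] [CompactSpace S] [T2Space S]
  [ContinuousMul S]

theorem isClosed_setOf_dvd_right (a : S) : IsClosed {x | a ∣ x} := by
  have : {x | a ∣ x} = range (a * ·) := by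
    ext x
    exact ⟨fun ⟨c, hc⟩ => ⟨c, hc.symm⟩, fun ⟨c, hc⟩ => ⟨c, hc.symm⟩⟩
  rw [this]
  exact (isCompact_range (continuous_const_mul a)).isClosed

theorem isClosed_setOf_dvd_left (z : S) : IsClosed {x | x ∣ z} := by
  have : {x | x ∣ z} = Prod.fst '' ((fun p : S × S => p.1 * p.2) ⁻¹' {z}) := by
    ext x
    exact ⟨fun ⟨c, hc⟩ => ⟨(x, c), hc.symm, rfl⟩, fun ⟨⟨_, c⟩, hc, hx⟩ => ⟨c, hx ▸ hc.symm⟩⟩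
  rw [this]
  exact ((isClosed_singleton.preimage continuous_mul).isCompact.image continuous_fst).isClosed

end CompactSemigroup

section Powers

variable {S : Type*} [Semigroup S]

theorem spow_add (s : S) (a b : ℕ) : spow s (a + b + 1) = spow s a * spow s b := by
  induction b with
  | zero => rfl
  | succ b ih => rw [← add_assoc, spow, ih, spow, mul_assoc]

theorem spow_commute (s : S) (a b : ℕ) : Commute (spow s a) (spow s b) := by
  rw [Commute, SemiconjBy, ← spow_add, ← spow_add, add_comm a]

variable [TopologicalSpace S]

/-- `tailClosure s n` is the closure of `{s ^ m : m > n}`. -/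
def tailClosure (s : S) (n : ℕ) : Set S := closure (range fun m => spow s (m + n))

theorem tailClosure_succ_subset (s : S) (n : ℕ) : tailClosure s (n + 1) ⊆ tailClosure s n :=
  closure_mono <| range_subset_iff.2 fun m => ⟨m + 1, by simp only [add_right_comm, add_assoc]⟩

variable [ContinuousMul S]

theorem mul_mem_tailClosure {s x y : S} {a b : ℕ} (hx : x ∈ tailClosure s a)
    (hy : y ∈ tailClosure s b) : x * y ∈ tailClosure s (a + b + 1) := by
  refine map_mem_closure₂ continuous_mul hx hy ?_
  rintro _ ⟨i, rfl⟩ _ ⟨j, rfl⟩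
  exact ⟨i + j, by simp only [← spow_add]; congr 1; ring⟩

theorem IsIdempotentElem.mem_tailClosure {s f : S} (hf : IsIdempotentElem f)
    (hfT : f ∈ tailClosure s 0) (n : ℕ) : f ∈ tailClosure s n := by
  induction n with
  | zero => exact hfT
  | succ n ih => simpa only [hf.eq] using mul_mem_tailClosure ih hfT

variable [CompactSpace S] [T2Space S]

theorem spow_dvd_of_mem_tailClosure {s z : S} {n : ℕ} (hz : z ∈ tailClosure s (n + 1)) :
    spow s n ∣ z := by
  refine closure_minimal ?_ (isClosed_setOf_dvd_right _) hz
  rintro _ ⟨m, rfl⟩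
  exact ⟨spow s m, by simp only [← spow_add]; congr 1; ring⟩

theorem dvd_of_mem_iInter_tailClosure {s x z : S} (hx : x ∈ closure (range (spow s)))
    (hz : ∀ n, z ∈ tailClosure s n) : x ∣ z := by
  refine closure_minimal ?_ (isClosed_setOf_dvd_left z) hx
  rintro _ ⟨n, rfl⟩
  exact spow_dvd_of_mem_tailClosure (hz (n + 1))

theorem exists_isIdempotentElem_mem_closure_range_spow (s : S) :
    ∃ e ∈ closure (range (spow s)), IsIdempotentElem e :=
  exists_idempotent_in_compact_subsemigroup continuous_mul_const (tailClosure s 0)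
    ⟨s, subset_closure (mem_range_self 0)⟩ isClosed_closure.isCompact
    fun _ hx _ hy => tailClosure_succ_subset s 0 (mul_mem_tailClosure hx hy)

end Powers

theorem unique_idempotent_in_closure_of_powers_general {S : Type*} [Semigroup S]
    [TopologicalSpace S] [CompactSpace S] [T2Space S]
    [ContinuousMul S] (s : S) :
    ∃! e : S, e ∈ closure (Set.range (spow s)) ∧ e * e = e := by
  obtain ⟨e, he, hee⟩ := exists_isIdempotentElem_mem_closure_range_spow s
  refine ⟨e, ⟨he, hee⟩, fun f ⟨hf, (hff : IsIdempotentElem f)⟩ => ?_⟩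
  have hpowers : ∀ a ∈ range (spow s), ∀ b ∈ range (spow s), Commute a b := by
    rintro _ ⟨i, rfl⟩ _ ⟨j, rfl⟩
    exact spow_commute s i j
  exact hff.eq_of_dvd_of_dvd hee
    (dvd_of_mem_iInter_tailClosure hf (hee.mem_tailClosure he))
    (dvd_of_mem_iInter_tailClosure he (hff.mem_tailClosure hf))
    (Commute.of_mem_closure hpowers hf he)

/-- In a compact Hausdorff totally disconnected topological semigroup
(a profinite semigroup), the closure of the set of positive powers of any
element `s` contains exactly one idempotent.
(Well-definedness of the ω-power on profinite semigroups.) -/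
theorem unique_idempotent_in_closure_of_powers {S : Type*} [Semigroup S]
    [TopologicalSpace S] [CompactSpace S] [T2Space S]
    [TotallyDisconnectedSpace S] [ContinuousMul S] (s : S) :
    ∃! e : S, e ∈ closure (Set.range (spow s)) ∧ e * e = e :=
  unique_idempotent_in_closure_of_powers_general s
end
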